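/- Let ρ be a two-qubit Schmidt-correlated state with coefficients c1, c2, c4 and let δ be any real number. Then the state ρ' = c4|00⟩⟨00| + c2·e^{iδ}|00⟩⟨11| + conj(c2)·e^{-iδ}|11⟩⟨00| + c1|11⟩⟨11| is LU equivalent to ρ, i.e., there exist 2×2 unitaries U1, U2 with ρ' = (U1⊗U2) ρ (U1⊗U2)†. -/

import Mathlib

/-!
The local unitary `X ⊗ !![0, w; 1, 0]` sends `|00⟩ ↦ |11⟩` and `|11⟩ ↦ w|00⟩`, so it exchanges
`c1` and `c4` and turns the coherence `c2` of `|00⟩⟨11|` into `w * conj c2`. Writing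
`c2 = r e^{iα}`, the phase `w = e^{i(2α + δ)}` makes this `c2 e^{iδ}`.
-/

open Matrix Kronecker

/-- The two-qubit Schmidt-correlated state
`ρ = c1|00⟩⟨00| + c2|00⟩⟨11| + conj(c2)|11⟩⟨00| + c4|11⟩⟨11|`. -/
noncomputable def scState (c1 c4 : ℝ) (c2 : ℂ) :
    Matrix (Fin 2 × Fin 2) (Fin 2 × Fin 2) ℂ :=
  Matrix.of fun p q =>
    if p = (0, 0) ∧ q = (0, 0) then (c1 : ℂ)
    else if p = (0, 0) ∧ q = (1, 1) then c2
    else if p = (1, 1) ∧ q = (0, 0) then (starRingEnd ℂ) c2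
    else if p = (1, 1) ∧ q = (1, 1) then (c4 : ℂ)
    else 0

open ComplexConjugate

open Complex in
theorem exists_exp_mul_I_mul_conj_eq (z : ℂ) (δ : ℝ) :
    ∃ θ : ℝ, exp (θ * I) * conj z = z * exp (δ * I) := by
  refine ⟨2 * arg z + δ, ?_⟩
  have hz := norm_mul_exp_arg_mul_I z
  generalize arg z = a at hz ⊢
  rw [← hz, map_mul, conj_ofReal, ← exp_conj]
  simp only [map_mul, conj_ofReal, conj_I]
  rw [mul_left_comm, ← exp_add, mul_assoc, ← exp_add]
  congr 2
  push_cast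
  ring

def flipPhase (w : ℂ) : Matrix (Fin 2) (Fin 2) ℂ := !![0, w; 1, 0]

theorem flipPhase_mem_unitaryGroup {w : ℂ} (hw : w * conj w = 1) :
    flipPhase w ∈ unitaryGroup (Fin 2) ℂ := by
  rw [mem_unitaryGroup_iff]
  ext i j
  fin_cases i <;> fin_cases j <;> simp [flipPhase, mul_apply, hw]

theorem flipPhase_kronecker_conj_scState (c1 c4 : ℝ) (c2 : ℂ) {w : ℂ} (hw : w * conj w = 1) :
    (flipPhase 1 ⊗ₖ flipPhase w) * scState c1 c4 c2 * (flipPhase 1 ⊗ₖ flipPhase w)ᴴ =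
      scState c4 c1 (w * conj c2) := by
  ext ⟨i, j⟩ ⟨k, l⟩
  fin_cases i <;> fin_cases j <;> fin_cases k <;> fin_cases l <;>
    simp [flipPhase, scState, mul_apply, Fintype.sum_prod_type, mul_right_comm _ _ (conj w), hw,
      mul_comm]

theorem sc_swap_phase_LU_equiv (c1 c4 : ℝ) (c2 : ℂ) (δ : ℝ) :
    ∃ U1 U2 : Matrix (Fin 2) (Fin 2) ℂ,
      U1 ∈ Matrix.unitaryGroup (Fin 2) ℂ ∧ U2 ∈ Matrix.unitaryGroup (Fin 2) ℂ ∧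
      scState c4 c1 (c2 * Complex.exp (δ * Complex.I)) =
        (U1 ⊗ₖ U2) * scState c1 c4 c2 * (U1 ⊗ₖ U2)ᴴ := by
  obtain ⟨θ, hθ⟩ := exists_exp_mul_I_mul_conj_eq c2 δ
  have hw : Complex.exp (θ * Complex.I) * conj (Complex.exp (θ * Complex.I)) = 1 := by
    rw [Complex.mul_conj', Complex.norm_exp_ofReal_mul_I]; norm_num
  refine ⟨flipPhase 1, flipPhase _, flipPhase_mem_unitaryGroup (by simp),
    flipPhase_mem_unitaryGroup hw, ?_⟩
  rw [flipPhase_kronecker_conj_scState c1 c4 c2 hw, hθ]
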